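/- arXiv:1507.08022 — 4 statements merged into one kernel-verified Lean document; each statement's English description precedes it below -/
import Mathlib

section
/- Let k ≥ 1 and let F be a spanning forest of the complete graph K_k. If F has c connected components and k_1, …, k_c are the numbers of vertices of its components, then the number of spanning trees of K_k containing all edges of F equals k^{c−2} · ∏_{i=1}^c k_i (an identity of rational numbers; the right-hand side is an integer). -/
open SimpleGraph Finset

variable {V : Type*}

/-- The number of spanning trees of a graph `G`. -/
noncomputable def treeCount (G : SimpleGraph V) : ℕ :=
  Nat.card {H : SimpleGraph V // H ≤ G ∧ H.IsTree}

/-- The number of spanning trees of `G` containing all edges of `H`. -/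
noncomputable def treeCountContaining (G H : SimpleGraph V) : ℕ :=
  Nat.card {T : SimpleGraph V // T ≤ G ∧ H ≤ T ∧ T.IsTree}

/-- The symmetric function `e ↦ 1/d(u_e) + 1/d(v_e)`. -/
noncomputable def invDegSum [Fintype V] (G : SimpleGraph V) [DecidableRel G.Adj] :
    Sym2 V → ℚ :=
  Sym2.lift ⟨fun u v => (G.degree u : ℚ)⁻¹ + (G.degree v : ℚ)⁻¹, fun u v => add_comm _ _⟩

/-- The graph obtained from `G` by replacing each edge of `F` by a path of length `r+1`
joining its two ends (inserting `r` new internal vertices on each such edge).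
The internal vertex at distance `i` from `u` on the path replacing the edge `uv`
is represented by the unordered pair `{(u, i), (v, r+1-i)}`. -/
def SrOn (G : SimpleGraph V) (F : Set (Sym2 V)) (r : ℕ) :
    SimpleGraph (V ⊕ {p : Sym2 (V × ℕ) //
      ∃ u v i, G.Adj u v ∧ s(u, v) ∈ F ∧ 1 ≤ i ∧ i ≤ r ∧ p = s((u, i), (v, r + 1 - i))}) :=
  SimpleGraph.fromRel fun x y =>
    match x, y with
    | Sum.inl u, Sum.inl v => G.Adj u v ∧ (s(u, v) ∉ F ∨ r = 0)
    | Sum.inl u, Sum.inr p => ∃ v, G.Adj u v ∧ s(u, v) ∈ F ∧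
        (p : Sym2 (V × ℕ)) = s((u, 1), (v, r))
    | Sum.inr p, Sum.inr q => ∃ u v i, G.Adj u v ∧ s(u, v) ∈ F ∧ 1 ≤ i ∧ i + 1 ≤ r ∧
        (p : Sym2 (V × ℕ)) = s((u, i), (v, r + 1 - i)) ∧
        (q : Sym2 (V × ℕ)) = s((u, i + 1), (v, r - i))
    | Sum.inr _, Sum.inl _ => False

/-- `S_r(G)`: every edge of `G` is replaced by a path of length `r+1`. -/
def Sr (G : SimpleGraph V) (r : ℕ) := SrOn G Set.univ r

/-- `G_{-E'}`: delete the edges of `E'` and attach a new pendant edge at each end of each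
deleted edge (one new pendant vertex per edge-end incidence). -/
def pendantize (G : SimpleGraph V) (E' : Set (Sym2 V)) :
    SimpleGraph (V ⊕ {p : Sym2 V × V // p.1 ∈ E' ∧ p.2 ∈ p.1}) :=
  SimpleGraph.fromRel fun x y =>
    match x, y with
    | Sum.inl u, Sum.inl v => G.Adj u v ∧ s(u, v) ∉ E'
    | Sum.inl u, Sum.inr p => (p : Sym2 V × V).2 = u
    | _, _ => False

/-- `G_{•e}`: subdivide the edge `xy` once. -/
def subdivideOnce (G : SimpleGraph V) (x y : V) : SimpleGraph (V ⊕ Unit) :=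
  SimpleGraph.fromRel fun a b =>
    match a, b with
    | Sum.inl u, Sum.inl v => G.Adj u v ∧ s(u, v) ≠ s(x, y)
    | Sum.inl u, Sum.inr _ => u = x ∨ u = y
    | _, _ => False

/-- `G_{r•e}`: replace the edge `xy` by a path of length `r+1` (insert `r` new vertices). -/
def subdividePath (G : SimpleGraph V) (x y : V) (r : ℕ) : SimpleGraph (V ⊕ Fin r) :=
  SimpleGraph.fromRel fun a b =>
    match a, b with
    | Sum.inl u, Sum.inl v => G.Adj u v ∧ (s(u, v) ≠ s(x, y) ∨ r = 0)
    | Sum.inl u, Sum.inr i => (u = x ∧ (i : ℕ) = 0) ∨ (u = y ∧ (i : ℕ) = r - 1)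
    | Sum.inr i, Sum.inr j => (j : ℕ) = (i : ℕ) + 1
    | Sum.inr _, Sum.inl _ => False

/-- The clique-inserted graph `C(G)`: its vertices are the darts of `G`; the vertex of the
clique at `u` indexed by an edge `e` incident with `u` is the dart of `e` starting at `u`. -/
def cliqueInserted (G : SimpleGraph V) : SimpleGraph G.Dart where
  Adj d d' := d ≠ d' ∧ (d.toProd.1 = d'.toProd.1 ∨ d.edge = d'.edge)
  symm := ⟨fun d d' h => ⟨h.1.symm, h.2.imp Eq.symm Eq.symm⟩⟩
  loopless := ⟨fun d h => h.1 rfl⟩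

/-!
Write `N(F)` for the number of spanning trees containing `F` and induct on the number `c` of
components of `F`. A spanning tree is the only spanning tree containing itself, which settles
`c = 1`. For `c ≥ 2`, double count the pairs `(T, (u, v))` with `T ⊇ F` a spanning tree and
`(u, v)` an oriented edge of `T` not in `F`. Each such `T` has exactly `c - 1` edges outside `F`,
giving `2 (c - 1) N(F)` pairs. For fixed `(u, v)` with `u`, `v` in different components of `F`,
the trees are those containing the forest `F + uv`, which has `c - 1` components and product of
component orders `(∏ kᵢ) (1 / k(u) + 1 / k(v))`, where `k(u)` is the order of the component of
`u`. By induction the pairs number `k^(c-3) (∏ kᵢ) ∑ (1 / k(u) + 1 / k(v))`, and the sum over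
ordered pairs in different components is `2 ∑ᵤ (k - k(u)) / k(u) = 2 k (c - 1)`.
-/

namespace SimpleGraph

section SupEdge

variable {G : SimpleGraph V} {s t : V}

theorem reachable_sup_edge_iff (hst : s ≠ t) {u v : V} :
    (G ⊔ edge s t).Reachable u v ↔ G.Reachable u v ∨
      G.Reachable u s ∧ G.Reachable t v ∨ G.Reachable u t ∧ G.Reachable s v := by
  refine ⟨fun h => h.elim fun p => ?_, ?_⟩
  · clear h
    induction p with
    | nil => exact .inl .rfl
    | cons h _ ih =>
      rcases (sup_adj ..).1 h with h | h
      · have := h.reachable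
        grind [Reachable.trans]
      · obtain ⟨⟨rfl, rfl⟩ | ⟨rfl, rfl⟩, -⟩ := (edge_adj ..).1 h <;> grind [Reachable.rfl]
  · have hadj : (G ⊔ edge s t).Adj s t := by simp [edge_adj, hst]
    have hle : G ≤ G ⊔ edge s t := le_sup_left
    rintro (h | ⟨h₁, h₂⟩ | ⟨h₁, h₂⟩)
    · exact h.mono hle
    · exact ((h₁.mono hle).trans hadj.reachable).trans (h₂.mono hle)
    · exact ((h₁.mono hle).trans hadj.symm.reachable).trans (h₂.mono hle)

noncomputable def connectedComponentSupEdgeEquiv (h : ¬G.Reachable s t) :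
    {C : G.ConnectedComponent // C ≠ G.connectedComponentMk t} ≃
      (G ⊔ edge s t).ConnectedComponent := by
  have hst : s ≠ t := fun h' => h (h' ▸ .rfl)
  refine Equiv.ofBijective (fun C => C.1.map (Hom.ofLE le_sup_left)) ⟨?_, ?_⟩
  · rintro ⟨C₁, h₁⟩ ⟨C₂, h₂⟩ heq
    induction C₁ using ConnectedComponent.ind
    induction C₂ using ConnectedComponent.ind
    simp only [ConnectedComponent.map_mk, Hom.coe_ofLE, id, ConnectedComponent.eq,
      reachable_sup_edge_iff hst, ne_eq] at heq h₁ h₂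
    simp only [Subtype.mk.injEq, ConnectedComponent.eq]
    grind [reachable_comm]
  · intro C'
    induction C' using ConnectedComponent.ind with | h a
    by_cases ha : G.Reachable a t
    · refine ⟨⟨G.connectedComponentMk s, fun h' => h (ConnectedComponent.eq.1 h')⟩, ?_⟩
      simp only [ConnectedComponent.map_mk, Hom.coe_ofLE, id, ConnectedComponent.eq,
        reachable_sup_edge_iff hst]
      exact .inr (.inl ⟨.rfl, ha.symm⟩)
    · exact ⟨⟨G.connectedComponentMk a, fun h' => ha (ConnectedComponent.eq.1 h')⟩, rfl⟩

@[simp]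
theorem connectedComponentSupEdgeEquiv_apply (h : ¬G.Reachable s t)
    (C : {C : G.ConnectedComponent // C ≠ G.connectedComponentMk t}) :
    connectedComponentSupEdgeEquiv h C = C.1.map (Hom.ofLE le_sup_left) := rfl

theorem card_connectedComponent_sup_edge [Finite V] (h : ¬G.Reachable s t) :
    Nat.card (G ⊔ edge s t).ConnectedComponent + 1 = Nat.card G.ConnectedComponent := by
  classical
  rw [← Nat.card_congr (connectedComponentSupEdgeEquiv h), ← Finite.card_option,
    Nat.card_congr (Equiv.optionSubtypeNe _)]

open scoped Classical in
theorem supp_connectedComponentMk_sup_edge (hst : s ≠ t) {a : V} (ha : ¬G.Reachable a t) :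
    ((G ⊔ edge s t).connectedComponentMk a).supp =
      (G.connectedComponentMk a).supp ∪
        if G.Reachable a s then (G.connectedComponentMk t).supp else ∅ := by
  ext b
  split_ifs <;>
  simp only [Set.mem_union, Set.mem_empty_iff_false, ConnectedComponent.mem_supp_iff,
    ConnectedComponent.eq, reachable_sup_edge_iff hst] <;>
  grind [reachable_comm, Reachable.trans]

open scoped Classical in
theorem card_supp_map_sup_edge [Finite V] (h : ¬G.Reachable s t) {C : G.ConnectedComponent}
    (hC : C ≠ G.connectedComponentMk t) :
    Nat.card (C.map (Hom.ofLE (le_sup_left : G ≤ G ⊔ edge s t))).supp = Nat.card C.supp +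
      if C = G.connectedComponentMk s then Nat.card (G.connectedComponentMk t).supp else 0 := by
  have hst : s ≠ t := fun h' => h (h' ▸ .rfl)
  induction C using ConnectedComponent.ind with | h a
  have ha : ¬G.Reachable a t := fun h' => hC (ConnectedComponent.sound h')
  simp only [ConnectedComponent.map_mk, Hom.coe_ofLE, id,
    supp_connectedComponentMk_sup_edge hst ha, ConnectedComponent.eq]
  split_ifs with has
  · rw [Nat.card_coe_set_eq, Set.ncard_union_eq _ (Set.toFinite _) (Set.toFinite _),
      ← Nat.card_coe_set_eq, ← Nat.card_coe_set_eq]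
    exact G.pairwise_disjoint_supp_connectedComponent hC
  · simp

theorem finprod_card_supp_sup_edge [Finite V] (h : ¬G.Reachable s t) :
    ∏ᶠ C : (G ⊔ edge s t).ConnectedComponent, (Nat.card C.supp : ℚ) =
      (∏ᶠ C : G.ConnectedComponent, (Nat.card C.supp : ℚ)) *
        ((Nat.card (G.connectedComponentMk s).supp : ℚ)⁻¹ +
          (Nat.card (G.connectedComponentMk t).supp : ℚ)⁻¹) := by
  classical
  have := Fintype.ofFinite V
  have hpos (C : G.ConnectedComponent) : (Nat.card C.supp : ℚ) ≠ 0 := by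
    have := C.nonempty_supp.to_subtype
    exact Nat.cast_ne_zero.2 Nat.card_pos.ne'
  let Cs : {C // C ≠ G.connectedComponentMk t} :=
    ⟨G.connectedComponentMk s, fun h' => h (ConnectedComponent.eq.1 h')⟩
  rw [finprod_eq_prod_of_fintype, finprod_eq_prod_of_fintype,
    ← (connectedComponentSupEdgeEquiv h).prod_comp,
    Fintype.prod_eq_mul_prod_subtype_ne _ Cs,
    Fintype.prod_eq_mul_prod_subtype_ne _ (G.connectedComponentMk t),
    Fintype.prod_eq_mul_prod_subtype_ne _ Cs]
  simp only [connectedComponentSupEdgeEquiv_apply]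
  rw [card_supp_map_sup_edge h Cs.2, if_pos rfl]
  rw [Finset.prod_congr rfl fun C _ => by
    rw [card_supp_map_sup_edge h C.1.2, if_neg fun h' => C.2 (Subtype.ext h'), add_zero]]
  have := hpos (G.connectedComponentMk s)
  have := hpos (G.connectedComponentMk t)
  dsimp only [Cs]
  push_cast
  field_simp
  ring

end SupEdge

section Components

variable {G : SimpleGraph V}

theorem card_connectedComponent_eq_one_iff :
    Nat.card G.ConnectedComponent = 1 ↔ G.Connected := by
  refine ⟨fun h => ?_, fun h => ?_⟩
  · obtain ⟨_, ⟨C⟩⟩ := Nat.card_eq_one_iff_unique.1 h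
    exact (connected_iff G).2 ⟨fun u v => ConnectedComponent.eq.1 (Subsingleton.elim _ _),
      ⟨C.exists_rep.choose⟩⟩
  · exact Nat.card_eq_one_iff_unique.2
      ⟨h.preconnected.subsingleton_connectedComponent, ⟨G.connectedComponentMk h.nonempty.some⟩⟩

theorem Connected.finprod_card_supp (h : G.Connected) :
    ∏ᶠ C : G.ConnectedComponent, (Nat.card C.supp : ℚ) = Nat.card V := by
  obtain ⟨_, ⟨C⟩⟩ := Nat.card_eq_one_iff_unique.1 (card_connectedComponent_eq_one_iff.2 h)
  have : Unique G.ConnectedComponent := { default := C, uniq := fun _ => Subsingleton.elim _ _ }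
  have hsupp : (default : G.ConnectedComponent).supp = Set.univ :=
    Set.eq_univ_of_forall fun _ => Subsingleton.elim _ _
  rw [finprod_unique, hsupp, Nat.card_univ]

theorem natCard_adj_eq_two_mul_ncard_edgeSet [Finite V] (G : SimpleGraph V) :
    Nat.card {p : V × V // G.Adj p.1 p.2} = 2 * G.edgeSet.ncard := by
  classical
  have := Fintype.ofFinite V
  rw [Nat.card_eq_fintype_card, Fintype.card_subtype, ← coe_edgeFinset, Set.ncard_coe_finset,
    two_mul_card_edgeFinset]

theorem card_filter_reachable [Fintype V] [DecidableRel G.Reachable] (u : V) :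
    #{v | G.Reachable u v} = Nat.card (G.connectedComponentMk u).supp := by
  classical
  rw [Nat.card_eq_card_toFinset]
  congr
  ext v
  simp [ConnectedComponent.mem_supp_iff, ConnectedComponent.eq, reachable_comm]

theorem card_filter_not_reachable [Fintype V] [DecidableRel G.Reachable] (u : V) :
    #{v | ¬G.Reachable u v} = Fintype.card V - Nat.card (G.connectedComponentMk u).supp := by
  classical
  rw [filter_not, card_sdiff_of_subset (filter_subset _ _), card_univ, card_filter_reachable]

theorem sum_inv_card_supp [Fintype V] (G : SimpleGraph V) :
    ∑ v, (Nat.card (G.connectedComponentMk v).supp : ℚ)⁻¹ = Nat.card G.ConnectedComponent := by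
  classical
  rw [← Fintype.sum_fiberwise G.connectedComponentMk, Nat.card_eq_fintype_card, ← card_univ,
    card_eq_sum_ones, Nat.cast_sum]
  refine sum_congr rfl fun C _ => ?_
  have := C.nonempty_supp.to_subtype
  rw [sum_congr rfl fun v _ => by rw [v.2], sum_const, card_univ, ← Nat.card_eq_fintype_card,
    nsmul_eq_mul, Nat.cast_one]
  exact mul_inv_cancel₀ (Nat.cast_ne_zero.2 (Nat.card_pos (α := C.supp)).ne')

theorem sum_not_reachable_inv_card_supp [Fintype V] [DecidableRel G.Reachable] :
    ∑ p : V × V with ¬G.Reachable p.1 p.2, ((Nat.card (G.connectedComponentMk p.1).supp : ℚ)⁻¹ +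
      (Nat.card (G.connectedComponentMk p.2).supp : ℚ)⁻¹) =
      2 * Fintype.card V * (Nat.card G.ConnectedComponent - 1) := by
  have hswap : ∑ p : V × V with ¬G.Reachable p.1 p.2,
      (Nat.card (G.connectedComponentMk p.2).supp : ℚ)⁻¹ =
      ∑ p : V × V with ¬G.Reachable p.1 p.2, (Nat.card (G.connectedComponentMk p.1).supp : ℚ)⁻¹ :=
    sum_equiv (Equiv.prodComm V V) (by simp [reachable_comm]) fun _ _ => rfl
  have hrow (u : V) : ∑ v with ¬G.Reachable u v, (Nat.card (G.connectedComponentMk u).supp : ℚ)⁻¹ =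
      Fintype.card V * (Nat.card (G.connectedComponentMk u).supp : ℚ)⁻¹ - 1 := by
    have := (G.connectedComponentMk u).nonempty_supp.to_subtype
    have hle : Nat.card (G.connectedComponentMk u).supp ≤ Fintype.card V :=
      Nat.card_eq_fintype_card (α := V) ▸ Nat.card_le_card_of_injective _ Subtype.val_injective
    rw [sum_const, card_filter_not_reachable, nsmul_eq_mul, Nat.cast_sub hle, sub_mul,
      mul_inv_cancel₀ (Nat.cast_ne_zero.2 Nat.card_pos.ne')]
  rw [sum_add_distrib, hswap, ← two_mul, sum_filter, Fintype.sum_prod_type]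
  simp only [← sum_filter, hrow]
  rw [sum_sub_distrib, ← mul_sum, sum_inv_card_supp, sum_const, card_univ, nsmul_one]
  ring

end Components

section SpanningTrees

variable {F T : SimpleGraph V}

theorem IsAcyclic.adj_of_le_of_reachable (hT : T.IsAcyclic) (hFT : F ≤ T) {u v : V}
    (hr : F.Reachable u v) (hadj : T.Adj u v) : F.Adj u v := by
  by_contra hF
  refine isAcyclic_iff_forall_adj_isBridge.1 hT hadj (hr.mono fun a b hab => ?_)
  refine (deleteEdges_adj ..).2 ⟨hFT hab, fun h => hF ?_⟩
  rw [← mem_edgeSet, ← Set.mem_singleton_iff.1 h]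
  exact hab

theorem IsAcyclic.card_connectedComponent_eq_add [Finite V] (hT : T.IsAcyclic) (hFT : F ≤ T) :
    Nat.card F.ConnectedComponent = Nat.card T.ConnectedComponent + (T \ F).edgeSet.ncard := by
  induction hn : (T \ F).edgeSet.ncard generalizing F with
  | zero =>
    rw [Set.ncard_eq_zero, edgeSet_eq_empty, sdiff_eq_bot_iff] at hn
    rw [le_antisymm hFT hn, add_zero]
  | succ n ih =>
    obtain ⟨e, he⟩ := Set.nonempty_of_ncard_ne_zero (hn.trans_ne n.succ_ne_zero)
    induction e using Sym2.ind with | h u v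
    have ⟨hTuv, hFuv⟩ : T.Adj u v ∧ ¬F.Adj u v := he
    have hr : ¬F.Reachable u v := fun hr => hFuv (hT.adj_of_le_of_reachable hFT hr hTuv)
    have hle : F ⊔ edge u v ≤ T := sup_le hFT ((edge_le_iff _).2 (.inr hTuv))
    have hgap : (T \ (F ⊔ edge u v)).edgeSet.ncard = n := by
      rw [edgeSet_sdiff, edgeSet_sup, edgeSet_edge_of_ne hTuv.ne, ← Set.sdiff_sdiff,
        ← edgeSet_sdiff, Set.ncard_sdiff_singleton_of_mem he, hn, Nat.add_sub_cancel]
    rw [← card_connectedComponent_sup_edge hr, ih hle hgap, add_assoc]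

theorem IsTree.natCard_adj_sdiff [Finite V] (hT : T.IsTree) (hFT : F ≤ T) :
    Nat.card {p : V × V // T.Adj p.1 p.2 ∧ ¬F.Adj p.1 p.2} =
      2 * (Nat.card F.ConnectedComponent - 1) := by
  rw [hT.isAcyclic.card_connectedComponent_eq_add hFT,
    card_connectedComponent_eq_one_iff.2 hT.connected, Nat.add_sub_cancel_left,
    ← natCard_adj_eq_two_mul_ncard_edgeSet]
  simp only [sdiff_adj]

theorem IsTree.natCard_isTree_le (hF : F.IsTree) : Nat.card {T // F ≤ T ∧ T.IsTree} = 1 := by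
  have heq (T : {T // F ≤ T ∧ T.IsTree}) : F = T.1 :=
    (isTree_iff_minimal_connected.1 T.2.2).eq_of_le hF.connected T.2.1
  exact Nat.card_eq_one_iff_unique.2
    ⟨⟨fun T₁ T₂ => Subtype.ext ((heq T₁).symm.trans (heq T₂))⟩, ⟨⟨F, le_rfl, hF⟩⟩⟩

theorem natCard_isTree_adj_of_not_reachable {u v : V} (hr : ¬F.Reachable u v) :
    Nat.card {T // F ≤ T ∧ T.IsTree ∧ T.Adj u v ∧ ¬F.Adj u v} =
      Nat.card {T // F ⊔ edge u v ≤ T ∧ T.IsTree} := by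
  have hne : u ≠ v := fun h => hr (h ▸ .rfl)
  have hna : ¬F.Adj u v := fun h => hr h.reachable
  refine Nat.card_congr (Equiv.subtypeEquivRight fun T => ?_)
  simp only [sup_le_iff, edge_le_iff, hne, false_or, hna, not_false_eq_true, and_true]
  tauto

theorem natCard_isTree_le_mul_eq_sum [Fintype V] [DecidableRel F.Reachable] :
    Nat.card {T // F ≤ T ∧ T.IsTree} * (2 * (Nat.card F.ConnectedComponent - 1)) =
      ∑ p : V × V with ¬F.Reachable p.1 p.2, Nat.card {T // F ⊔ edge p.1 p.2 ≤ T ∧ T.IsTree} := by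
  classical
  have hdouble : Nat.card ((T : {T // F ≤ T ∧ T.IsTree}) ×
        {p : V × V // T.1.Adj p.1 p.2 ∧ ¬F.Adj p.1 p.2}) =
      Nat.card ((p : V × V) ×
        {T // F ≤ T ∧ T.IsTree ∧ T.Adj p.1 p.2 ∧ ¬F.Adj p.1 p.2}) :=
    Nat.card_congr
      { toFun x := ⟨x.2.1, x.1.1, x.1.2.1, x.1.2.2, x.2.2⟩
        invFun y := ⟨⟨y.2.1, y.2.2.1, y.2.2.2.1⟩, y.1, y.2.2.2.2⟩ }
  rw [Nat.card_sigma, Nat.card_sigma] at hdouble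
  simp only [fun T : {T // F ≤ T ∧ T.IsTree} => T.2.2.natCard_adj_sdiff T.2.1, sum_const,
    card_univ, smul_eq_mul, ← Nat.card_eq_fintype_card] at hdouble
  rw [hdouble, sum_filter]
  refine sum_congr rfl fun p _ => ?_
  split_ifs with hr
  · rw [Nat.card_eq_zero]
    exact .inl ⟨fun ⟨T, hFT, hT, hadj, hna⟩ =>
      hna (hT.isAcyclic.adj_of_le_of_reachable hFT hr hadj)⟩
  · exact natCard_isTree_adj_of_not_reachable hr

theorem natCard_isTree_le_eq [Fintype V] [Nonempty V] (hF : F.IsAcyclic) :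
    (Nat.card {T // F ≤ T ∧ T.IsTree} : ℚ) =
      (Fintype.card V : ℚ) ^ ((Nat.card F.ConnectedComponent : ℤ) - 2) *
        ∏ᶠ C : F.ConnectedComponent, (Nat.card C.supp : ℚ) := by
  have hn : (Fintype.card V : ℚ) ≠ 0 := Nat.cast_ne_zero.2 Fintype.card_ne_zero
  obtain ⟨m, hm⟩ := Nat.exists_eq_add_one.2 (Nat.card_pos (α := F.ConnectedComponent))
  induction m generalizing F with
  | zero =>
    have hconn := card_connectedComponent_eq_one_iff.1 hm
    rw [IsTree.natCard_isTree_le ⟨hconn, hF⟩, hconn.finprod_card_supp, hm,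
      Nat.card_eq_fintype_card]
    push_cast
    rw [zpow_neg_one, inv_mul_cancel₀ hn]
  | succ m ih =>
    classical
    have hstep (p : V × V) (hp : p ∈ ({p | ¬F.Reachable p.1 p.2} : Finset (V × V))) :
        (Nat.card {T // F ⊔ edge p.1 p.2 ≤ T ∧ T.IsTree} : ℚ) =
          (Fintype.card V : ℚ) ^ ((m : ℤ) - 1) *
            ((∏ᶠ C : F.ConnectedComponent, (Nat.card C.supp : ℚ)) *
              ((Nat.card (F.connectedComponentMk p.1).supp : ℚ)⁻¹ +
                (Nat.card (F.connectedComponentMk p.2).supp : ℚ)⁻¹)) := by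
      rw [mem_filter] at hp
      have hc : Nat.card (F ⊔ edge p.1 p.2).ConnectedComponent = m + 1 := by
        have := card_connectedComponent_sup_edge hp.2
        omega
      rw [ih (hF.sup_edge_of_not_reachable hp.2) hc, finprod_card_supp_sup_edge hp.2, hc]
      push_cast
      ring_nf
    have hcount := congrArg (Nat.cast : ℕ → ℚ) (natCard_isTree_le_mul_eq_sum (F := F))
    rw [Nat.cast_mul, Nat.cast_sum, sum_congr rfl hstep, ← mul_sum, ← mul_sum,
      sum_not_reachable_inv_card_supp, hm] at hcount
    rw [hm]
    push_cast at hcount ⊢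
    refine mul_right_cancel₀ (by positivity : (2 * ((m : ℚ) + 1)) ≠ 0) ?_
    rw [hcount, show (m : ℤ) + 1 + 1 - 2 = (m - 1) + 1 by ring, zpow_add_one₀ hn]
    ring

end SpanningTrees

end SimpleGraph

theorem treeCountContaining_top (H : SimpleGraph V) :
    treeCountContaining ⊤ H = Nat.card {T // H ≤ T ∧ T.IsTree} :=
  Nat.card_congr (Equiv.subtypeEquivRight fun T => by simp)

/-- **Lovász.** For any spanning forest `F` of the complete graph `K_k` (`k ≥ 1`) with `c`
connected components of orders `k₁, …, k_c`, the number of spanning trees of `K_k`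
containing all edges of `F` equals `k^(c−2) · ∏ᵢ kᵢ` in `ℚ`. -/
theorem stmt9 (k : ℕ) (hk : 1 ≤ k) (F : SimpleGraph (Fin k)) (hF : F.IsAcyclic) :
    (treeCountContaining (⊤ : SimpleGraph (Fin k)) F : ℚ) =
      (k : ℚ) ^ ((Nat.card F.ConnectedComponent : ℤ) - 2) *
        ∏ᶠ c : F.ConnectedComponent, (Nat.card c.supp : ℚ) := by
  have : Nonempty (Fin k) := ⟨⟨0, hk⟩⟩
  rw [treeCountContaining_top, SimpleGraph.natCard_isTree_le_eq hF, Fintype.card_fin]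
end

section
/- Let G be a finite graph and e an edge of G with ends x and y. Let G_{•e} be the graph obtained from G by subdividing e once (inserting one new vertex on e), and let G_{−e} be the graph obtained from G − e by attaching one new pendant edge at x and one new pendant edge at y (with two distinct new pendant vertices). Then t(L(G_{•e})) = t(L(G)) + t(L(G_{−e})). In particular, if e is a bridge of G then t(L(G_{•e})) = t(L(G)). -/
open SimpleGraph Finset

variable {V : Type*}

/-!
In `L(G_{•e})` the two halves `a = xm` and `b = ym` of the subdivided edge are adjacent, so the
spanning trees of `L(G_{•e})` split into those containing the edge `ab` and those avoiding it.

Those avoiding `ab` are the spanning trees of `L(G_{•e}) - ab`, which is isomorphic to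
`L(G_{-e})`: splitting the midpoint `m` into two pendant vertices only separates `a` from `b`.

Those containing `ab` correspond to the spanning trees of the contraction `L(G_{•e}) / ab`, which
is `L(G)`. Since `a` and `b` have no common neighbour, the contraction merges no other pair of
edges, so it lowers both the number of vertices and the number of edges of a spanning subgraph
through `ab` by exactly one while preserving connectivity; a tree is a connected graph with one
edge fewer than vertices.

If `e` is a bridge, the two pendant edges of `G_{-e}` lie in different components, so
`L(G_{-e})` is disconnected and has no spanning tree.
-/

namespace SimpleGraph

variable {W : Type*}

theorem Reachable.map_apply {G : SimpleGraph V} (f : V → W) {u v : V} (h : G.Reachable u v) :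
    (G.map f).Reachable (f u) (f v) := by
  obtain ⟨p⟩ := h
  induction p with
  | nil => rfl
  | @cons u w _ hadj _ ih =>
    by_cases hf : f u = f w
    · rwa [hf]
    · exact (map_adj_apply' hadj hf).reachable.trans ih

theorem Reachable.of_map_apply {G : SimpleGraph V} {f : V → W}
    (hf : ∀ u v, f u = f v → G.Reachable u v) {u v : V}
    (h : (G.map f).Reachable (f u) (f v)) : G.Reachable u v := by
  suffices ∀ p q, (G.map f).Reachable p q →
      ∀ u v, f u = p → f v = q → G.Reachable u v from this _ _ h u v rfl rfl
  rintro p q ⟨w⟩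
  induction w with
  | nil => exact fun u v hu hv => hf u v (hu.trans hv.symm)
  | cons hadj _ ih =>
    rintro u v hu hv
    obtain ⟨-, u', v', h', rfl, rfl⟩ := hadj
    exact ((hf _ _ hu).trans h'.reachable).trans (ih _ _ rfl hv)

theorem connected_map_iff {G : SimpleGraph V} {f : V → W} (hsurj : Function.Surjective f)
    (hf : ∀ u v, f u = f v → G.Reachable u v) : (G.map f).Connected ↔ G.Connected := by
  have hnonempty : Nonempty W ↔ Nonempty V :=
    ⟨fun ⟨w⟩ => ⟨(hsurj w).choose⟩, fun ⟨v⟩ => ⟨f v⟩⟩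
  simp only [connected_iff, hnonempty]
  refine and_congr_left fun _ => ⟨fun h u v => (h (f u) (f v)).of_map_apply hf, fun h p q => ?_⟩
  obtain ⟨u, rfl⟩ := hsurj p
  obtain ⟨v, rfl⟩ := hsurj q
  exact (h u v).map_apply f

theorem reachable_of_mem_edgeSet {G : SimpleGraph V} {z : Sym2 V} (hz : z ∈ G.edgeSet)
    {u v : V} (hu : u ∈ z) (hv : v ∈ z) : G.Reachable u v := by
  induction z using Sym2.ind with | _ p q => ?_
  rw [Sym2.mem_iff] at hu hv
  rcases hu with rfl | rfl <;> rcases hv with rfl | rfl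
  exacts [.rfl, hz.reachable, hz.symm.reachable, .rfl]

theorem Reachable.of_lineGraph {G : SimpleGraph V} {z w : G.edgeSet}
    (h : G.lineGraph.Reachable z w) {u v : V} (hu : u ∈ (z : Sym2 V)) (hv : v ∈ (w : Sym2 V)) :
    G.Reachable u v := by
  obtain ⟨p⟩ := h
  induction p generalizing u with
  | nil => exact reachable_of_mem_edgeSet (Subtype.prop _) hu hv
  | cons hadj _ ih =>
    obtain ⟨-, t, ht, ht'⟩ := lineGraph_adj_iff_exists.1 hadj
    exact (reachable_of_mem_edgeSet (Subtype.prop _) hu ht).trans (ih ht' hv)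

theorem Iso.treeCount_eq {G : SimpleGraph V} {G' : SimpleGraph W} (e : G ≃g G') :
    treeCount G = treeCount G' := by
  refine Nat.card_congr (e.toEquiv.simpleGraph.subtypeEquiv fun T => ?_)
  refine and_congr ?_ (Iso.comap e.toEquiv.symm T).isTree_iff.symm
  simp only [Equiv.simpleGraph_apply]
  constructor
  · intro h p q hpq
    simpa using e.symm.map_adj_iff.1 (h hpq)
  · intro h u v huv
    simpa using e.map_adj_iff.1 (@h (e u) (e v) (by
      show T.Adj (e.toEquiv.symm (e.toEquiv u)) (e.toEquiv.symm (e.toEquiv v))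
      rwa [Equiv.symm_apply_apply, Equiv.symm_apply_apply]))

theorem treeCount_eq_zero_of_not_connected {G : SimpleGraph V} (h : ¬ G.Connected) :
    treeCount G = 0 :=
  Nat.card_eq_zero.2 (Or.inl ⟨fun T => h (T.2.2.connected.mono T.2.1)⟩)

theorem treeCount_eq_card_adj_add_card_not_adj [Finite V] (H : SimpleGraph V) (a b : V) :
    treeCount H = Nat.card {T // T ≤ H ∧ T.IsTree ∧ T.Adj a b} +
      Nat.card {T // T ≤ H ∧ T.IsTree ∧ ¬ T.Adj a b} := by
  rw [treeCount, show Nat.card {T // T ≤ H ∧ T.IsTree} =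
      Nat.card ↥{T : SimpleGraph V | T ≤ H ∧ T.IsTree} from rfl, Nat.card_coe_set_eq,
    ← Set.ncard_inter_add_ncard_sdiff_eq_ncard _ {T | T.Adj a b}, ← Nat.card_coe_set_eq,
    ← Nat.card_coe_set_eq]
  exact congrArg₂ (· + ·) (Nat.card_congr (Equiv.subtypeEquivRight fun _ => and_assoc))
    (Nat.card_congr (Equiv.subtypeEquivRight fun _ => and_assoc))

theorem card_isTree_not_adj_eq_treeCount_deleteEdges (H : SimpleGraph V) (a b : V) :
    Nat.card {T // T ≤ H ∧ T.IsTree ∧ ¬ T.Adj a b} = treeCount (H.deleteEdges {s(a, b)}) :=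
  Nat.card_congr <| Equiv.subtypeEquivRight fun T => by
    constructor
    · rintro ⟨hle, hT, hab⟩
      refine ⟨fun u v huv => deleteEdges_adj.2 ⟨hle huv, fun h => hab ?_⟩, hT⟩
      rw [← mem_edgeSet, ← Set.mem_singleton_iff.1 h]
      exact huv
    · rintro ⟨hle, hT⟩
      exact ⟨hle.trans (deleteEdges_le _), hT, fun h => (deleteEdges_adj.1 (hle h)).2 rfl⟩

section Contraction

variable {H : SimpleGraph V} {a b : V} {f : V → W}

theorem _root_.Function.Surjective.natCard_add_one [Finite V] (hsurj : Function.Surjective f)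
    (hab : a ≠ b) (hf : ∀ u v, f u = f v ↔ u = v ∨ s(u, v) = s(a, b)) :
    Nat.card W + 1 = Nat.card V := by
  have hinj : Set.InjOn f (Set.univ \ {b}) := by
    rintro u ⟨-, hu⟩ v ⟨-, hv⟩ h
    refine ((hf u v).1 h).resolve_right ?_
    rw [Sym2.eq_iff]
    rintro (⟨-, rfl⟩ | ⟨rfl, -⟩) <;> simp_all
  have himage : f '' (Set.univ \ {b}) = Set.univ := by
    refine Set.eq_univ_of_forall fun w => ?_
    obtain ⟨u, rfl⟩ := hsurj w
    by_cases hu : u = b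
    · exact ⟨a, ⟨trivial, hab⟩, hu ▸ (hf a b).2 (Or.inr rfl)⟩
    · exact ⟨u, ⟨trivial, hu⟩, rfl⟩
  rw [← Set.ncard_univ, ← himage, hinj.ncard_image,
    Set.ncard_sdiff_singleton_add_one (Set.mem_univ b), Set.ncard_univ]

theorem edgeSet_map_eq_image_sdiff (hf : ∀ u v, f u = f v ↔ u = v ∨ s(u, v) = s(a, b))
    (T : SimpleGraph V) : (T.map f).edgeSet = Sym2.map f '' (T.edgeSet \ {s(a, b)}) := by
  ext z
  induction z using Sym2.ind with | _ p q => ?_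
  simp only [mem_edgeSet, map_adj', Set.mem_image, Set.mem_sdiff, Set.mem_singleton_iff]
  constructor
  · rintro ⟨hpq, u, v, huv, rfl, rfl⟩
    exact ⟨s(u, v), ⟨huv, fun h => hpq ((hf u v).2 (Or.inr h))⟩, rfl⟩
  · rintro ⟨z, ⟨hz, hzab⟩, hzpq⟩
    induction z using Sym2.ind with | _ u v => ?_
    have huv : f u ≠ f v := fun h => ((hf u v).1 h).elim hz.ne hzab
    rw [Sym2.map_mk, Sym2.eq_iff] at hzpq
    rcases hzpq with ⟨rfl, rfl⟩ | ⟨rfl, rfl⟩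
    · exact ⟨huv, u, v, hz, rfl, rfl⟩
    · exact ⟨huv.symm, v, u, hz.symm, rfl, rfl⟩

theorem injOn_sym2Map_edgeSet_sdiff (hf : ∀ u v, f u = f v ↔ u = v ∨ s(u, v) = s(a, b))
    (hcommon : ∀ u, H.Adj u a → ¬ H.Adj u b) :
    Set.InjOn (Sym2.map f) (H.edgeSet \ {s(a, b)}) := by
  rintro z ⟨hz, hzab⟩ w ⟨hw, hwab⟩ h
  induction z using Sym2.ind with | _ u v => ?_
  induction w using Sym2.ind with | _ u' v' => ?_
  simp only [Set.mem_singleton_iff, mem_edgeSet, Sym2.map_mk, Sym2.eq_iff,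
    hf] at hz hzab hw hwab h ⊢
  grind [adj_comm, SimpleGraph.irrefl]

theorem ncard_edgeSet_map_add_one [Finite V]
    (hf : ∀ u v, f u = f v ↔ u = v ∨ s(u, v) = s(a, b))
    (hcommon : ∀ u, H.Adj u a → ¬ H.Adj u b) {T : SimpleGraph V} (hT : T ≤ H)
    (hTab : T.Adj a b) : (T.map f).edgeSet.ncard + 1 = T.edgeSet.ncard := by
  rw [edgeSet_map_eq_image_sdiff hf, ((injOn_sym2Map_edgeSet_sdiff hf hcommon).mono
      (Set.sdiff_subset_sdiff_left (edgeSet_mono hT))).ncard_image,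
    Set.ncard_sdiff_singleton_add_one (T.mem_edgeSet.2 hTab)]

theorem isTree_map_iff [Finite V] (hsurj : Function.Surjective f)
    (hf : ∀ u v, f u = f v ↔ u = v ∨ s(u, v) = s(a, b))
    (hcommon : ∀ u, H.Adj u a → ¬ H.Adj u b) {T : SimpleGraph V} (hT : T ≤ H)
    (hTab : T.Adj a b) : (T.map f).IsTree ↔ T.IsTree := by
  have : Finite W := Finite.of_surjective f hsurj
  have hfiber : ∀ u v, f u = f v → T.Reachable u v := by
    intro u v huv
    rcases (hf u v).1 huv with rfl | huv
    · rfl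
    · exact (T.mem_edgeSet.1 (huv ▸ hTab : s(u, v) ∈ T.edgeSet)).reachable
  rw [isTree_iff_connected_and_card, isTree_iff_connected_and_card,
    connected_map_iff hsurj hfiber, ← hsurj.natCard_add_one hTab.ne hf, Nat.card_coe_set_eq,
    Nat.card_coe_set_eq, ← ncard_edgeSet_map_add_one hf hcommon hT hTab, add_left_inj]

theorem map_inf_comap_sup_edge (hf : ∀ u v, f u = f v ↔ u = v ∨ s(u, v) = s(a, b))
    {T : SimpleGraph W} (hT : T ≤ H.map f) : (H ⊓ T.comap f ⊔ edge a b).map f = T := by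
  ext p q
  rw [map_adj']
  constructor
  · rintro ⟨hpq, u, v, huv | huv, rfl, rfl⟩
    · exact huv.2
    · refine absurd ((hf u v).2 (Or.inr ?_)) hpq
      rw [edge_adj] at huv
      rcases huv.1 with ⟨rfl, rfl⟩ | ⟨rfl, rfl⟩
      · rfl
      · exact Sym2.eq_swap
  · intro hpq
    obtain ⟨hne, u, v, huv, rfl, rfl⟩ := hT hpq
    exact ⟨hne, u, v, Or.inl ⟨huv, hpq⟩, rfl, rfl⟩

theorem inf_comap_map_sup_edge (hf : ∀ u v, f u = f v ↔ u = v ∨ s(u, v) = s(a, b))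
    (hcommon : ∀ u, H.Adj u a → ¬ H.Adj u b) {T : SimpleGraph V} (hT : T ≤ H)
    (hTab : T.Adj a b) : H ⊓ (T.map f).comap f ⊔ edge a b = T := by
  ext u v
  rw [sup_adj, inf_adj, comap_adj, edge_adj]
  constructor
  · rintro (⟨huv, hfuv, u', v', huv', hu, hv⟩ | ⟨⟨rfl, rfl⟩ | ⟨rfl, rfl⟩, -⟩)
    · have hsym : s(u', v') = s(u, v) := by
        refine injOn_sym2Map_edgeSet_sdiff hf hcommon ⟨hT huv', fun h => ?_⟩
          ⟨huv, fun h => hfuv ((hf u v).2 (Or.inr h))⟩ (by simp [hu, hv])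
        exact hfuv (hu ▸ hv ▸ (hf u' v').2 (Or.inr h))
      rw [← mem_edgeSet, ← hsym]
      exact huv'
    · exact hTab
    · exact hTab.symm
  · intro huv
    by_cases hab : s(u, v) = s(a, b)
    · exact Or.inr ⟨Sym2.eq_iff.1 hab, huv.ne⟩
    · exact Or.inl ⟨hT huv, map_adj_apply' huv fun h => ((hf u v).1 h).elim huv.ne hab⟩

theorem card_isTree_adj_eq_treeCount_map [Finite V] (hab : H.Adj a b)
    (hsurj : Function.Surjective f) (hf : ∀ u v, f u = f v ↔ u = v ∨ s(u, v) = s(a, b))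
    (hcommon : ∀ u, H.Adj u a → ¬ H.Adj u b) :
    Nat.card {T // T ≤ H ∧ T.IsTree ∧ T.Adj a b} = treeCount (H.map f) := by
  have hle (T : SimpleGraph W) : H ⊓ T.comap f ⊔ edge a b ≤ H :=
    sup_le inf_le_left ((edge_le_iff H).2 (Or.inr hab))
  have hadj (T : SimpleGraph W) : (H ⊓ T.comap f ⊔ edge a b).Adj a b :=
    Or.inr ((edge_adj _ _ _ _).2 ⟨Or.inl ⟨rfl, rfl⟩, hab.ne⟩)
  exact Nat.card_congr
    { toFun T := ⟨T.1.map f, map_monotone f T.2.1,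
        (isTree_map_iff hsurj hf hcommon T.2.1 T.2.2.2).2 T.2.2.1⟩
      invFun T := ⟨H ⊓ T.1.comap f ⊔ edge a b, hle T,
        (isTree_map_iff hsurj hf hcommon (hle T) (hadj T)).1
          ((map_inf_comap_sup_edge hf T.2.1).symm ▸ T.2.2), hadj T⟩
      left_inv T := Subtype.ext (inf_comap_map_sup_edge hf hcommon T.2.1 T.2.2.2)
      right_inv T := Subtype.ext (map_inf_comap_sup_edge hf T.2.1) }

end Contraction

end SimpleGraph

open SimpleGraph

theorem mem_edgeSet_subdivideOnce {G : SimpleGraph V} {x y : V} {z : Sym2 (V ⊕ Unit)} :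
    z ∈ (subdivideOnce G x y).edgeSet ↔
      (∃ u v, G.Adj u v ∧ s(u, v) ≠ s(x, y) ∧ z = s(.inl u, .inl v)) ∨
        z = s(.inl x, .inr ()) ∨ z = s(.inl y, .inr ()) := by
  induction z using Sym2.ind with | _ p q => ?_
  rcases p with u | ⟨⟩ <;> rcases q with v | ⟨⟩
  all_goals simp [subdivideOnce]
  grind [adj_comm, SimpleGraph.irrefl]

namespace subdivideOnce

variable {G : SimpleGraph V} {x y : V}

variable (G x y) in
def edgeX : (subdivideOnce G x y).edgeSet :=
  ⟨s(.inl x, .inr ()), mem_edgeSet_subdivideOnce.2 (by simp)⟩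

variable (G x y) in
def edgeY : (subdivideOnce G x y).edgeSet :=
  ⟨s(.inl y, .inr ()), mem_edgeSet_subdivideOnce.2 (by simp)⟩

variable (x y) in
def contractSym2 : Sym2 (V ⊕ Unit) → Sym2 V :=
  Sym2.lift ⟨fun p q => match p, q with
    | .inl u, .inl v => s(u, v)
    | _, _ => s(x, y), by rintro (u | ⟨⟩) (v | ⟨⟩) <;> simp [Sym2.eq_swap]⟩

@[simp] theorem contractSym2_inl_inl (u v : V) :
    contractSym2 x y s(.inl u, .inl v) = s(u, v) :=
  rfl

@[simp] theorem contractSym2_inl_inr (u : V) : contractSym2 x y s(.inl u, .inr ()) = s(x, y) :=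
  rfl

def contract (he : G.Adj x y) (z : (subdivideOnce G x y).edgeSet) : G.edgeSet :=
  ⟨contractSym2 x y z, by
    obtain ⟨u, v, huv, -, hz⟩ | hz | hz := mem_edgeSet_subdivideOnce.1 z.2 <;> simpa [hz]⟩

theorem contract_eq_contract_iff (he : G.Adj x y) {z w : (subdivideOnce G x y).edgeSet} :
    contract he z = contract he w ↔ z = w ∨ s(z, w) = s(edgeX G x y, edgeY G x y) := by
  obtain ⟨z, hz⟩ := z
  obtain ⟨w, hw⟩ := w
  obtain ⟨u, v, huv, hne, rfl⟩ | rfl | rfl := mem_edgeSet_subdivideOnce.1 hz <;>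
  obtain ⟨u', v', huv', hne', rfl⟩ | rfl | rfl := mem_edgeSet_subdivideOnce.1 hw <;>
  simp [contract, edgeX, edgeY] <;> grind

theorem contract_surjective (he : G.Adj x y) : Function.Surjective (contract he) := by
  rintro ⟨g, hg⟩
  induction g using Sym2.ind with | _ u v => ?_
  by_cases huv : s(u, v) = s(x, y)
  · exact ⟨edgeX G x y, Subtype.ext huv.symm⟩
  · exact ⟨⟨s(.inl u, .inl v), mem_edgeSet_subdivideOnce.2 (.inl ⟨u, v, hg, huv, rfl⟩)⟩,
      rfl⟩

theorem mem_contract_of_inl_mem (he : G.Adj x y) {z : (subdivideOnce G x y).edgeSet} {t : V}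
    (ht : .inl t ∈ (z : Sym2 (V ⊕ Unit))) : t ∈ (contract he z : Sym2 V) := by
  obtain ⟨z, hz⟩ := z
  obtain ⟨u, v, huv, hne, rfl⟩ | rfl | rfl := mem_edgeSet_subdivideOnce.1 hz <;>
    simp_all [contract]

theorem contract_of_inr_mem (he : G.Adj x y) {z : (subdivideOnce G x y).edgeSet}
    (hz : .inr () ∈ (z : Sym2 (V ⊕ Unit))) : contract he z = ⟨s(x, y), he⟩ := by
  obtain ⟨z, hz'⟩ := z
  obtain ⟨u, v, huv, hne, rfl⟩ | rfl | rfl := mem_edgeSet_subdivideOnce.1 hz' <;>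
    simp_all [contract]

theorem exists_contract_eq_and_inl_mem (he : G.Adj x y) {p : G.edgeSet} {t : V}
    (ht : t ∈ (p : Sym2 V)) :
    ∃ z, contract he z = p ∧ .inl t ∈ (z : Sym2 (V ⊕ Unit)) := by
  obtain ⟨p, hp⟩ := p
  induction p using Sym2.ind with | _ u v => ?_
  by_cases huv : s(u, v) = s(x, y)
  · replace ht : t ∈ s(x, y) := huv ▸ ht
    rcases Sym2.mem_iff.1 ht with rfl | rfl
    · exact ⟨edgeX G t y, Subtype.ext huv.symm, by simp [edgeX]⟩
    · exact ⟨edgeY G x t, Subtype.ext huv.symm, by simp [edgeY]⟩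
  · exact ⟨⟨s(.inl u, .inl v), mem_edgeSet_subdivideOnce.2 (.inl ⟨u, v, hp, huv, rfl⟩)⟩,
      rfl, by simpa using ht⟩

theorem lineGraph_eq_map_contract (he : G.Adj x y) :
    G.lineGraph = (subdivideOnce G x y).lineGraph.map (contract he) := by
  ext p q
  rw [map_adj', lineGraph_adj_iff_exists]
  constructor
  · rintro ⟨hpq, t, htp, htq⟩
    obtain ⟨z, rfl, hz⟩ := exists_contract_eq_and_inl_mem he htp
    obtain ⟨w, rfl, hw⟩ := exists_contract_eq_and_inl_mem he htq
    exact ⟨hpq, z, w, lineGraph_adj_iff_exists.2 ⟨ne_of_apply_ne _ hpq, _, hz, hw⟩,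
      rfl, rfl⟩
  · rintro ⟨hpq, z, w, hzw, rfl, rfl⟩
    obtain ⟨-, t | ⟨⟩, hz, hw⟩ := lineGraph_adj_iff_exists.1 hzw
    · exact ⟨hpq, t, mem_contract_of_inl_mem he hz, mem_contract_of_inl_mem he hw⟩
    · exact absurd ((contract_of_inr_mem he hz).trans (contract_of_inr_mem he hw).symm) hpq

theorem lineGraph_adj_edgeX_edgeY (hxy : x ≠ y) :
    (subdivideOnce G x y).lineGraph.Adj (edgeX G x y) (edgeY G x y) := by
  rw [lineGraph_adj_iff_exists]
  exact ⟨by simp [edgeX, edgeY, hxy], .inr (), by simp [edgeX], by simp [edgeY]⟩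

theorem not_lineGraph_adj_edgeY_of_adj_edgeX (hxy : x ≠ y) {z : (subdivideOnce G x y).edgeSet}
    (hzx : (subdivideOnce G x y).lineGraph.Adj z (edgeX G x y)) :
    ¬ (subdivideOnce G x y).lineGraph.Adj z (edgeY G x y) := by
  obtain ⟨z, hz⟩ := z
  simp only [lineGraph_adj_iff_exists, edgeX, edgeY] at hzx ⊢
  obtain ⟨u, v, huv, hne, rfl⟩ | rfl | rfl := mem_edgeSet_subdivideOnce.1 hz <;>
    simp at hzx ⊢
  grind

end subdivideOnce

namespace pendantize

abbrev Pendant (x y : V) := {p : Sym2 V × V // p.1 ∈ ({s(x, y)} : Set (Sym2 V)) ∧ p.2 ∈ p.1}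

variable {G : SimpleGraph V} {x y : V}

variable (x y) in
def pendantX : Pendant x y := ⟨(s(x, y), x), rfl, Sym2.mem_mk_left x y⟩

variable (x y) in
def pendantY : Pendant x y := ⟨(s(x, y), y), rfl, Sym2.mem_mk_right x y⟩

theorem eq_pendantX_or_eq_pendantY (p : Pendant x y) : p = pendantX x y ∨ p = pendantY x y := by
  obtain ⟨⟨e, t⟩, he, ht⟩ := p
  obtain rfl : e = s(x, y) := he
  rcases Sym2.mem_iff.1 (show t ∈ s(x, y) from ht) with rfl | rfl
  exacts [.inl rfl, .inr rfl]

theorem _root_.mem_edgeSet_pendantize {z : Sym2 (V ⊕ Pendant x y)} :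
    z ∈ (pendantize G {s(x, y)}).edgeSet ↔
      (∃ u v, G.Adj u v ∧ s(u, v) ≠ s(x, y) ∧ z = s(.inl u, .inl v)) ∨
        z = s(.inl x, .inr (pendantX x y)) ∨ z = s(.inl y, .inr (pendantY x y)) := by
  induction z using Sym2.ind with | _ p q => ?_
  rcases p with u | p <;> rcases q with v | q
  · simp [pendantize]
    grind [adj_comm, SimpleGraph.irrefl]
  · rcases eq_pendantX_or_eq_pendantY q with rfl | rfl <;>
      simp [pendantize, pendantX, pendantY] <;> grind
  · rcases eq_pendantX_or_eq_pendantY p with rfl | rfl <;>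
      simp [pendantize, pendantX, pendantY] <;> grind
  · simp [pendantize]

variable (G x y) in
def mergeEdge (z : (pendantize G {s(x, y)}).edgeSet) : (subdivideOnce G x y).edgeSet :=
  ⟨Sym2.map (Sum.map id fun _ => ()) z.1, by
    rw [mem_edgeSet_subdivideOnce]
    obtain ⟨u, v, huv, hne, hz⟩ | hz | hz := mem_edgeSet_pendantize.1 z.2 <;> rw [hz]
    exacts [.inl ⟨u, v, huv, hne, rfl⟩, .inr (.inl rfl), .inr (.inr rfl)]⟩

theorem mergeEdge_injective : Function.Injective (mergeEdge G x y) := by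
  rintro ⟨z, hz⟩ ⟨w, hw⟩ h
  obtain ⟨u, v, huv, hne, rfl⟩ | rfl | rfl := mem_edgeSet_pendantize.1 hz <;>
  obtain ⟨u', v', huv', hne', rfl⟩ | rfl | rfl := mem_edgeSet_pendantize.1 hw <;>
  simp [mergeEdge] at h ⊢ <;> grind

theorem mergeEdge_surjective : Function.Surjective (mergeEdge G x y) := by
  rintro ⟨z, hz⟩
  obtain ⟨u, v, huv, hne, rfl⟩ | rfl | rfl := mem_edgeSet_subdivideOnce.1 hz
  · exact ⟨⟨_, mem_edgeSet_pendantize.2 (.inl ⟨u, v, huv, hne, rfl⟩)⟩, rfl⟩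
  · exact ⟨⟨_, mem_edgeSet_pendantize.2 (.inr (.inl rfl))⟩, rfl⟩
  · exact ⟨⟨_, mem_edgeSet_pendantize.2 (.inr (.inr rfl))⟩, rfl⟩

theorem lineGraph_adj_mergeEdge_iff {z w : (pendantize G {s(x, y)}).edgeSet} :
    ((subdivideOnce G x y).lineGraph.deleteEdges
        {s(subdivideOnce.edgeX G x y, subdivideOnce.edgeY G x y)}).Adj
        (mergeEdge G x y z) (mergeEdge G x y w) ↔
      (pendantize G {s(x, y)}).lineGraph.Adj z w := by
  obtain ⟨z, hz⟩ := z
  obtain ⟨w, hw⟩ := w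
  obtain ⟨u, v, huv, hne, rfl⟩ | rfl | rfl := mem_edgeSet_pendantize.1 hz <;>
  obtain ⟨u', v', huv', hne', rfl⟩ | rfl | rfl := mem_edgeSet_pendantize.1 hw <;>
  simp [mergeEdge, lineGraph_adj_iff_exists, subdivideOnce.edgeX, subdivideOnce.edgeY,
    pendantX, pendantY]

variable (G x y) in
noncomputable def lineGraphIso : (pendantize G {s(x, y)}).lineGraph ≃g
    (subdivideOnce G x y).lineGraph.deleteEdges
      {s(subdivideOnce.edgeX G x y, subdivideOnce.edgeY G x y)} :=
  ⟨.ofBijective (mergeEdge G x y) ⟨mergeEdge_injective, mergeEdge_surjective⟩,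
    lineGraph_adj_mergeEdge_iff⟩

theorem map_le_deleteEdges :
    (pendantize G {s(x, y)}).map (Sum.elim id fun p => p.1.2) ≤ G.deleteEdges {s(x, y)} := by
  rintro _ _ ⟨hne, a, b, hab, rfl, rfl⟩
  rcases a with u | p <;> rcases b with v | q <;> simp_all [pendantize]
  grind [adj_comm]

theorem not_connected_lineGraph (hbr : G.IsBridge s(x, y)) :
    ¬ (pendantize G {s(x, y)}).lineGraph.Connected := by
  intro h
  have hreach := (h.preconnected
    ⟨s(.inl x, .inr (pendantX x y)), mem_edgeSet_pendantize.2 (.inr (.inl rfl))⟩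
    ⟨s(.inl y, .inr (pendantY x y)), mem_edgeSet_pendantize.2 (.inr (.inr rfl))⟩).of_lineGraph
    (Sym2.mem_mk_left _ _) (Sym2.mem_mk_left _ _)
  exact isBridge_iff.1 hbr ((hreach.map_apply _).mono map_le_deleteEdges)

end pendantize

/-- For a finite graph `G` with an edge `xy`:
`t(L(G_{•e})) = t(L(G)) + t(L(G_{−e}))`, and if `xy` is a bridge then
`t(L(G_{•e})) = t(L(G))`. -/
theorem stmt13 [Fintype V] (G : SimpleGraph V) (x y : V) (he : G.Adj x y) :
    treeCount (SimpleGraph.lineGraph (subdivideOnce G x y)) =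
        treeCount (SimpleGraph.lineGraph G) +
          treeCount (SimpleGraph.lineGraph (pendantize G {s(x, y)})) ∧
      (G.IsBridge s(x, y) →
        treeCount (SimpleGraph.lineGraph (subdivideOnce G x y)) =
          treeCount (SimpleGraph.lineGraph G)) := by
  have hsplit : treeCount (subdivideOnce G x y).lineGraph =
      treeCount G.lineGraph + treeCount (pendantize G {s(x, y)}).lineGraph := by
    rw [treeCount_eq_card_adj_add_card_not_adj _ (subdivideOnce.edgeX G x y)
        (subdivideOnce.edgeY G x y),
      card_isTree_adj_eq_treeCount_map (subdivideOnce.lineGraph_adj_edgeX_edgeY he.ne)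
        (subdivideOnce.contract_surjective he)
        (fun _ _ => subdivideOnce.contract_eq_contract_iff he)
        (fun _ => subdivideOnce.not_lineGraph_adj_edgeY_of_adj_edgeX he.ne),
      ← subdivideOnce.lineGraph_eq_map_contract he, card_isTree_not_adj_eq_treeCount_deleteEdges,
      (pendantize.lineGraphIso G x y).treeCount_eq]
  refine ⟨hsplit, fun hbr => ?_⟩
  rw [hsplit, treeCount_eq_zero_of_not_connected (pendantize.not_connected_lineGraph hbr),
    add_zero]
end

section
/- Let H be a finite connected graph with n vertices and m edges, and let i be an integer with 0 ≤ i ≤ m − n + 1. Then C(m − n + 1, i) · t(H) = Σ_{E' ⊆ E(H), |E'| = i} t(H − E'), where C(·,·) denotes the binomial coefficient and the sum runs over all i-element subsets E' of E(H). -/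
open SimpleGraph Finset

variable {V : Type*}

/-- For a finite connected graph `H` with `n` vertices and `m` edges and any
`0 ≤ i ≤ m − n + 1`: `C(m−n+1, i) · t(H) = Σ_{E' ⊆ E(H), |E'| = i} t(H − E')`.
(Since `H` is connected, `m ≥ n − 1`, so `m − n + 1 = m + 1 - n` in `ℕ`.) -/
theorem stmt16 [Fintype V] [DecidableEq V] (H : SimpleGraph V) [DecidableRel H.Adj]
    (hH : H.Connected) (n m : ℕ) (hn : Fintype.card V = n) (hm : H.edgeFinset.card = m)
    (i : ℕ) (hi : i ≤ m + 1 - n) :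
    (m + 1 - n).choose i * treeCount H =
      ∑ E' ∈ H.edgeFinset.powerset.filter (fun E' : Finset (Sym2 V) => E'.card = i),
        treeCount (H.deleteEdges (E' : Set (Sym2 V))) := by
  classical
  set S := H.edgeFinset.powerset.filter (fun E' : Finset (Sym2 V) => E'.card = i) with hS
  set trees := Finset.univ.filter (fun T : SimpleGraph V => T ≤ H ∧ T.IsTree) with htrees
  have key : ∀ T ∈ trees,
      (S.filter (fun E' => Disjoint T.edgeFinset E')).card = (m + 1 - n).choose i := by
    intro T hT
    rw [htrees, Finset.mem_filter] at hT
    obtain ⟨-, hTH, hTt⟩ := hT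
    have hsub : T.edgeFinset ⊆ H.edgeFinset := SimpleGraph.edgeFinset_mono hTH
    have hcardT : T.edgeFinset.card + 1 = n := by rw [← hn]; exact hTt.card_edgeFinset
    have hle : T.edgeFinset.card ≤ m := hm ▸ Finset.card_le_card hsub
    have heq : S.filter (fun E' => Disjoint T.edgeFinset E')
        = Finset.powersetCard i (H.edgeFinset \ T.edgeFinset) := by
      ext E'
      simp only [hS, Finset.mem_filter, Finset.mem_powerset, Finset.mem_powersetCard,
        Finset.subset_sdiff]
      constructor
      · rintro ⟨⟨h1, h2⟩, h3⟩; exact ⟨⟨h1, h3.symm⟩, h2⟩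
      · rintro ⟨⟨h1, h3⟩, h2⟩; exact ⟨⟨h1, h2⟩, h3.symm⟩
    rw [heq, Finset.card_powersetCard, Finset.card_sdiff_of_subset hsub, hm]
    congr 1
    omega
  have hL : treeCount H = trees.card := by
    rw [treeCount, Nat.card_eq_fintype_card, Fintype.card_subtype]
  have hR : ∀ E' ∈ S,
      treeCount (H.deleteEdges (E' : Set (Sym2 V))) =
      (trees.filter (fun T => Disjoint T.edgeFinset E')).card := by
    intro E' hE'
    rw [treeCount, Nat.card_eq_fintype_card, Fintype.card_subtype, htrees,
      Finset.filter_filter]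
    congr 1
    apply Finset.filter_congr
    intro T _
    constructor
    · rintro ⟨hTd, ht⟩
      refine ⟨⟨le_trans hTd (SimpleGraph.deleteEdges_le _), ht⟩, ?_⟩
      rw [Finset.disjoint_left]
      intro e he hmem
      induction e using Sym2.ind with
      | _ a b =>
        have hadj : T.Adj a b := SimpleGraph.mem_edgeFinset.mp he
        have := hTd hadj
        rw [SimpleGraph.deleteEdges_adj] at this
        exact this.2 hmem
    · rintro ⟨⟨hTH, ht⟩, hdisj⟩
      refine ⟨fun a b hab => ?_, ht⟩
      rw [SimpleGraph.deleteEdges_adj]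
      exact ⟨hTH hab, fun hmem =>
        Finset.disjoint_left.mp hdisj (SimpleGraph.mem_edgeFinset.mpr hab) hmem⟩
  rw [hL, Finset.sum_congr rfl hR]
  simp_rw [Finset.card_filter]
  rw [Finset.sum_comm]
  simp_rw [← Finset.card_filter]
  rw [Finset.sum_congr rfl key, Finset.sum_const, smul_eq_mul, mul_comm]
end

section
/- Let G be a finite simple graph. Let C(G) be the clique-inserted graph of G: for each vertex u of G of degree s, C(G) contains a complete graph K_s whose vertices are indexed by the edges of G incident with u; and for each edge e = (u, v) of G, C(G) contains an edge m_e joining the vertex indexed by e in u's clique to the vertex indexed by e in v's clique. Let M = {m_e : e ∈ E(G)}. Then M is a matching of C(G), every connected component of C(G) − M is a complete graph, and t(L(G)) equals the number of spanning trees of C(G) containing all edges of M. -/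
open SimpleGraph Finset

variable {V : Type*}

/-!
A spanning tree of `C(G)` containing `M` is determined by its remaining edges, each of which
joins two darts with a common source inside one clique, i.e. two edges of `G` sharing a
vertex: an edge of `L(G)`. This identifies the spanning subgraphs `T'` with `M ≤ T' ≤ C(G)`
with the spanning subgraphs `T ≤ L(G)`. Walks in `T` and in its lift `T'` project onto each
other, so `T'` is connected iff `T` is, and `T'` has `|E(G)| + |E(T)|` edges on `2|E(G)|`
vertices, so `T'` has one edge fewer than vertices iff `T` does.

Removing `M` from `C(G)` leaves exactly the edges between darts with a common source, so the
components of `C(G) − M` are the cliques.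
-/

namespace SimpleGraph

variable {W : Type*} {G : SimpleGraph V}

lemma Reachable.map_of_forall_adj {H : SimpleGraph W} (f : V → W)
    (hf : ∀ x y, G.Adj x y → H.Reachable (f x) (f y)) {x y : V} (h : G.Reachable x y) :
    H.Reachable (f x) (f y) := by
  rw [reachable_iff_reflTransGen] at h ⊢
  exact Relation.ReflTransGen.lift' f
    (fun a b hab => (reachable_iff_reflTransGen _ _).1 (hf a b hab)) _ _ h

instance [Finite V] : Finite G.Dart :=
  Finite.of_injective _ Dart.toProd_injective

lemma card_dart_eq_two_mul_card_edgeSet [Finite V] (G : SimpleGraph V) :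
    Nat.card G.Dart = 2 * Nat.card G.edgeSet := by
  have := Fintype.ofFinite V
  classical
  rw [Nat.card_eq_fintype_card, dart_card_eq_twice_card_edges, edgeFinset_card,
    Nat.card_eq_fintype_card]

namespace Dart

def lineVertex (d : G.Dart) : G.edgeSet := ⟨d.edge, d.edge_mem⟩

@[simp]
lemma lineVertex_inj {d d' : G.Dart} : d.lineVertex = d'.lineVertex ↔ d.edge = d'.edge :=
  Subtype.ext_iff

lemma lineVertex_surjective : Function.Surjective (lineVertex : G.Dart → G.edgeSet) := by
  rintro ⟨e, he⟩
  induction e using Sym2.ind with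
  | _ a b => exact ⟨⟨(a, b), he⟩, rfl⟩

lemma fst_mem_edge (d : G.Dart) : d.fst ∈ d.edge :=
  Sym2.mem_mk_left _ _

lemma exists_edge_eq_fst_eq {e : Sym2 V} (he : e ∈ G.edgeSet) {u : V} (hu : u ∈ e) :
    ∃ d : G.Dart, d.edge = e ∧ d.fst = u := by
  induction e using Sym2.ind with
  | _ a b =>
    rcases Sym2.mem_iff.1 hu with rfl | rfl
    · exact ⟨⟨(u, b), he⟩, rfl, rfl⟩
    · exact ⟨⟨(u, a), he.symm⟩, Sym2.eq_swap, rfl⟩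

lemma eq_of_fst_eq_of_edge_eq {d d' : G.Dart} (hfst : d.fst = d'.fst) (hedge : d.edge = d'.edge) :
    d = d' := by
  rcases (dart_edge_eq_iff d d').1 hedge with h | rfl
  · exact h
  · exact absurd hfst d'.snd_ne_fst

lemma eq_symm_of_ne_of_edge_eq {d d' : G.Dart} (hne : d ≠ d') (hedge : d.edge = d'.edge) :
    d' = d.symm := by
  rcases (dart_edge_eq_iff d d').1 hedge with h | rfl
  · exact absurd h hne
  · exact (symm_symm d').symm

/-- Two distinct edges share at most one vertex. -/
lemma eq_of_edge_eq_of_fst_eq {c c' d d' : G.Dart} (hc : c.edge = d.edge) (hc' : c'.edge = d'.edge)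
    (hcfst : c.fst = c'.fst) (hdfst : d.fst = d'.fst) (hne : d.edge ≠ d'.edge) :
    c = d ∧ c' = d' := by
  have hfst : c.fst = d.fst := by
    by_contra h
    refine hne (Sym2.eq_of_ne_mem h ?_ d.fst_mem_edge ?_ ?_)
    · exact hc ▸ c.fst_mem_edge
    · exact hc' ▸ hcfst ▸ c'.fst_mem_edge
    · exact hdfst ▸ d'.fst_mem_edge
  exact ⟨eq_of_fst_eq_of_edge_eq hfst hc,
    eq_of_fst_eq_of_edge_eq (hcfst.symm.trans (hfst.trans hdfst)) hc'⟩

lemma mk_symm_eq_of_mem {x d : G.Dart} (h : x ∈ s(d, d.symm)) : s(d, d.symm) = s(x, x.symm) := by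
  rcases Sym2.mem_iff.1 h with rfl | rfl
  · rfl
  · rw [symm_symm, Sym2.eq_swap]

end Dart

lemma lineGraph_adj_exists_dart {e f : G.edgeSet} (h : G.lineGraph.Adj e f) :
    ∃ c c' : G.Dart, c.lineVertex = e ∧ c'.lineVertex = f ∧ c.fst = c'.fst := by
  obtain ⟨-, u, hue, huf⟩ := lineGraph_adj_iff_exists.1 h
  obtain ⟨c, hc, hcu⟩ := Dart.exists_edge_eq_fst_eq e.2 hue
  obtain ⟨c', hc', hc'u⟩ := Dart.exists_edge_eq_fst_eq f.2 huf
  exact ⟨c, c', Subtype.ext hc, Subtype.ext hc', hcu.trans hc'u.symm⟩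

end SimpleGraph

variable {G : SimpleGraph V}

def cliqueMatching (G : SimpleGraph V) : Set (Sym2 G.Dart) :=
  {e | ∃ d : G.Dart, e = s(d, d.symm)}

lemma mk_mem_cliqueMatching {d d' : G.Dart} : s(d, d') ∈ cliqueMatching G ↔ d' = d.symm := by
  constructor
  · rintro ⟨c, hc⟩
    rcases Sym2.eq_iff.1 hc with ⟨rfl, rfl⟩ | ⟨rfl, rfl⟩
    · rfl
    · exact (Dart.symm_symm _).symm
  · rintro rfl
    exact ⟨d, rfl⟩

lemma fromEdgeSet_cliqueMatching_le_iff {H : SimpleGraph G.Dart} :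
    fromEdgeSet (cliqueMatching G) ≤ H ↔ ∀ d : G.Dart, H.Adj d d.symm := by
  refine ⟨fun h d => h ⟨⟨d, rfl⟩, d.symm_ne.symm⟩, fun h d d' hdd' => ?_⟩
  obtain rfl := mk_mem_cliqueMatching.1 ((fromEdgeSet_adj _).1 hdd').1
  exact h d

lemma cliqueMatching_subset_edgeSet : cliqueMatching G ⊆ (cliqueInserted G).edgeSet := by
  rintro _ ⟨d, rfl⟩
  exact ⟨d.symm_ne.symm, Or.inr d.edge_symm.symm⟩

lemma cliqueMatching_disjoint {e f : Sym2 G.Dart} (he : e ∈ cliqueMatching G)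
    (hf : f ∈ cliqueMatching G) (hne : e ≠ f) (x : G.Dart) : ¬(x ∈ e ∧ x ∈ f) := by
  obtain ⟨d, rfl⟩ := he
  obtain ⟨c, rfl⟩ := hf
  rintro ⟨hxd, hxc⟩
  exact hne ((Dart.mk_symm_eq_of_mem hxd).trans (Dart.mk_symm_eq_of_mem hxc).symm)

lemma cliqueInserted_deleteEdges_adj {d d' : G.Dart} :
    ((cliqueInserted G).deleteEdges (cliqueMatching G)).Adj d d' ↔
      d ≠ d' ∧ d.fst = d'.fst := by
  rw [deleteEdges_adj, mk_mem_cliqueMatching]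
  constructor
  · rintro ⟨⟨hne, hfst | hedge⟩, hsymm⟩
    · exact ⟨hne, hfst⟩
    · exact absurd (Dart.eq_symm_of_ne_of_edge_eq hne hedge) hsymm
  · rintro ⟨hne, hfst⟩
    refine ⟨⟨hne, Or.inl hfst⟩, ?_⟩
    rintro rfl
    exact d.fst_ne_snd hfst

lemma SimpleGraph.Reachable.fst_eq_of_cliqueInserted_deleteEdges {d d' : G.Dart}
    (h : ((cliqueInserted G).deleteEdges (cliqueMatching G)).Reachable d d') : d.fst = d'.fst :=
  reachable_bot.1 <| h.map_of_forall_adj (H := ⊥) (fun d => d.fst) fun _ _ hxy =>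
    reachable_bot.2 (cliqueInserted_deleteEdges_adj.1 hxy).2

def cliqueLift (G : SimpleGraph V) (T : SimpleGraph G.edgeSet) : SimpleGraph G.Dart where
  Adj d d' :=
    d ≠ d' ∧ (d.edge = d'.edge ∨ d.fst = d'.fst ∧ T.Adj d.lineVertex d'.lineVertex)
  symm := ⟨fun _ _ ⟨hne, h⟩ =>
    ⟨hne.symm, h.imp Eq.symm fun h => ⟨h.1.symm, h.2.symm⟩⟩⟩
  loopless := ⟨fun _ h => h.1 rfl⟩

def lineProj (G : SimpleGraph V) (T' : SimpleGraph G.Dart) : SimpleGraph G.edgeSet where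
  Adj e f := e ≠ f ∧ ∃ d d' : G.Dart, d.lineVertex = e ∧ d'.lineVertex = f ∧ T'.Adj d d'
  symm := ⟨fun _ _ ⟨hne, d, d', hd, hd', h⟩ => ⟨hne.symm, d', d, hd', hd, h.symm⟩⟩
  loopless := ⟨fun _ h => h.1 rfl⟩

section Lift

variable {T : SimpleGraph G.edgeSet} {T' : SimpleGraph G.Dart}

lemma cliqueLift_le_cliqueInserted : cliqueLift G T ≤ cliqueInserted G := by
  rintro d d' ⟨hne, hedge | ⟨hfst, -⟩⟩
  · exact ⟨hne, Or.inr hedge⟩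
  · exact ⟨hne, Or.inl hfst⟩

lemma fromEdgeSet_cliqueMatching_le_cliqueLift :
    fromEdgeSet (cliqueMatching G) ≤ cliqueLift G T :=
  fromEdgeSet_cliqueMatching_le_iff.2 fun d => ⟨d.symm_ne.symm, Or.inl d.edge_symm.symm⟩

lemma lineProj_le_lineGraph (hT' : T' ≤ cliqueInserted G) : lineProj G T' ≤ G.lineGraph := by
  rintro _ _ ⟨hne, d, d', rfl, rfl, h⟩
  obtain ⟨-, hfst | hedge⟩ := hT' h
  · exact lineGraph_adj_iff_exists.2 ⟨hne, d.fst, d.fst_mem_edge, hfst ▸ d'.fst_mem_edge⟩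
  · exact absurd (Dart.lineVertex_inj.2 hedge) hne

lemma cliqueLift_adj_of_lineVertex {c c' : G.Dart} (hfst : c.fst = c'.fst)
    (h : T.Adj c.lineVertex c'.lineVertex) : (cliqueLift G T).Adj c c' :=
  ⟨fun hcc' => h.ne (congrArg Dart.lineVertex hcc'), Or.inr ⟨hfst, h⟩⟩

lemma lineProj_cliqueLift (hT : T ≤ G.lineGraph) : lineProj G (cliqueLift G T) = T := by
  ext e f
  constructor
  · rintro ⟨hne, d, d', rfl, rfl, -, hedge | ⟨-, h⟩⟩
    · exact absurd (Dart.lineVertex_inj.2 hedge) hne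
    · exact h
  · intro h
    obtain ⟨c, c', rfl, rfl, hfst⟩ := lineGraph_adj_exists_dart (hT h)
    exact ⟨h.ne, c, c', rfl, rfl, cliqueLift_adj_of_lineVertex hfst h⟩

lemma cliqueLift_lineProj (hT' : T' ≤ cliqueInserted G)
    (hM : fromEdgeSet (cliqueMatching G) ≤ T') : cliqueLift G (lineProj G T') = T' := by
  ext d d'
  constructor
  · rintro ⟨hne, hedge | ⟨hfst, hne', c, c', hc, hc', h⟩⟩
    · rw [Dart.eq_symm_of_ne_of_edge_eq hne hedge]
      exact fromEdgeSet_cliqueMatching_le_iff.1 hM d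
    · obtain ⟨-, hcfst | hcedge⟩ := hT' h
      · obtain ⟨rfl, rfl⟩ := Dart.eq_of_edge_eq_of_fst_eq (Dart.lineVertex_inj.1 hc)
          (Dart.lineVertex_inj.1 hc') hcfst hfst (Dart.lineVertex_inj.not.1 hne')
        exact h
      · exact absurd (hc.symm.trans ((Dart.lineVertex_inj.2 hcedge).trans hc')) hne'
  · intro h
    obtain ⟨hne, hfst | hedge⟩ := hT' h
    · have hne' : d.lineVertex ≠ d'.lineVertex := fun hl =>
        hne (Dart.eq_of_fst_eq_of_edge_eq hfst (Dart.lineVertex_inj.1 hl))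
      exact ⟨hne, Or.inr ⟨hfst, hne', d, d', rfl, rfl, h⟩⟩
    · exact ⟨hne, Or.inl hedge⟩

end Lift

section Count

variable {T : SimpleGraph G.edgeSet}

open Classical in
noncomputable def cliqueLiftDartSplit (T : SimpleGraph G.edgeSet) (d : (cliqueLift G T).Dart) :
    G.Dart ⊕ T.Dart :=
  if h : d.fst.edge = d.snd.edge then .inl d.fst
  else .inr ⟨(d.fst.lineVertex, d.snd.lineVertex), (d.adj.2.resolve_left h).2⟩

lemma cliqueLiftDartSplit_injective : Function.Injective (cliqueLiftDartSplit T) := by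
  intro x y hxy
  unfold cliqueLiftDartSplit at hxy
  split_ifs at hxy with hx hy hy
  · have hfst : x.fst = y.fst := Sum.inl_injective hxy
    refine Dart.ext _ _ (Prod.ext hfst ?_)
    rw [Dart.eq_symm_of_ne_of_edge_eq x.adj.1 hx, Dart.eq_symm_of_ne_of_edge_eq y.adj.1 hy, hfst]
  · obtain ⟨hfst, hsnd⟩ := Prod.ext_iff.1 (congrArg Dart.toProd (Sum.inr_injective hxy))
    obtain ⟨h1, h2⟩ := Dart.eq_of_edge_eq_of_fst_eq (Dart.lineVertex_inj.1 hfst)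
      (Dart.lineVertex_inj.1 hsnd) (x.adj.2.resolve_left hx).1 (y.adj.2.resolve_left hy).1 hy
    exact Dart.ext _ _ (Prod.ext h1 h2)

lemma cliqueLiftDartSplit_surjective (hT : T ≤ G.lineGraph) :
    Function.Surjective (cliqueLiftDartSplit T) := by
  rintro (d | t)
  · exact ⟨⟨(d, d.symm), d.symm_ne.symm, Or.inl d.edge_symm.symm⟩,
      dif_pos d.edge_symm.symm⟩
  · obtain ⟨c, c', hc, hc', hfst⟩ := lineGraph_adj_exists_dart (hT t.adj)
    have hadj : T.Adj c.lineVertex c'.lineVertex := hc ▸ hc' ▸ t.adj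
    refine ⟨⟨(c, c'), cliqueLift_adj_of_lineVertex hfst hadj⟩, ?_⟩
    rw [cliqueLiftDartSplit, dif_neg (Dart.lineVertex_inj.not.1 hadj.ne)]
    exact congrArg Sum.inr (Dart.ext _ _ (Prod.ext hc hc'))

lemma card_edgeSet_cliqueLift [Finite V] (hT : T ≤ G.lineGraph) :
    Nat.card (cliqueLift G T).edgeSet = Nat.card G.edgeSet + Nat.card T.edgeSet := by
  have h := Nat.card_eq_of_bijective _
    ⟨cliqueLiftDartSplit_injective, cliqueLiftDartSplit_surjective hT⟩
  rw [Nat.card_sum, card_dart_eq_two_mul_card_edgeSet, card_dart_eq_two_mul_card_edgeSet,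
    card_dart_eq_two_mul_card_edgeSet] at h
  omega

end Count

section Connectivity

variable {T : SimpleGraph G.edgeSet}

lemma cliqueLift_reachable_of_lineVertex_eq {d d' : G.Dart} (h : d.lineVertex = d'.lineVertex) :
    (cliqueLift G T).Reachable d d' := by
  by_cases hdd' : d = d'
  · exact hdd' ▸ Reachable.refl _
  · exact Adj.reachable ⟨hdd', Or.inl (Dart.lineVertex_inj.1 h)⟩

lemma SimpleGraph.Reachable.lineVertex_of_cliqueLift {d d' : G.Dart}
    (h : (cliqueLift G T).Reachable d d') : T.Reachable d.lineVertex d'.lineVertex := by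
  refine h.map_of_forall_adj _ ?_
  rintro x y ⟨-, hedge | ⟨-, hadj⟩⟩
  · exact Dart.lineVertex_inj.2 hedge ▸ Reachable.refl _
  · exact hadj.reachable

lemma cliqueLift_reachable_of_reachable (hT : T ≤ G.lineGraph) {d d' : G.Dart}
    (h : T.Reachable d.lineVertex d'.lineVertex) : (cliqueLift G T).Reachable d d' := by
  let s := Function.surjInv (Dart.lineVertex_surjective (G := G))
  have hs : ∀ e, (s e).lineVertex = e := Function.surjInv_eq _
  have hsection : (cliqueLift G T).Reachable (s d.lineVertex) (s d'.lineVertex) := by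
    refine h.map_of_forall_adj s fun e f hef => ?_
    obtain ⟨c, c', rfl, rfl, hfst⟩ := lineGraph_adj_exists_dart (hT hef)
    exact ((cliqueLift_reachable_of_lineVertex_eq (hs _)).trans
      (cliqueLift_adj_of_lineVertex hfst hef).reachable).trans
      (cliqueLift_reachable_of_lineVertex_eq (hs _).symm)
  exact ((cliqueLift_reachable_of_lineVertex_eq (hs _).symm).trans hsection).trans
    (cliqueLift_reachable_of_lineVertex_eq (hs _))

lemma cliqueLift_connected_iff (hT : T ≤ G.lineGraph) :
    (cliqueLift G T).Connected ↔ T.Connected := by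
  rw [connected_iff, connected_iff]
  refine and_congr ⟨fun h e f => ?_, fun h d d' => cliqueLift_reachable_of_reachable hT (h _ _)⟩
    ⟨fun ⟨d⟩ => ⟨d.lineVertex⟩, fun _ => Dart.lineVertex_surjective.nonempty⟩
  obtain ⟨d, rfl⟩ := Dart.lineVertex_surjective e
  obtain ⟨d', rfl⟩ := Dart.lineVertex_surjective f
  exact (h d d').lineVertex_of_cliqueLift

lemma cliqueLift_isTree_iff [Finite V] (hT : T ≤ G.lineGraph) :
    (cliqueLift G T).IsTree ↔ T.IsTree := by
  rw [isTree_iff_connected_and_card, isTree_iff_connected_and_card, cliqueLift_connected_iff hT,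
    card_edgeSet_cliqueLift hT, card_dart_eq_two_mul_card_edgeSet]
  exact and_congr_right fun _ => by omega

end Connectivity

def spanningTreesEquiv [Finite V] (G : SimpleGraph V) :
    {T : SimpleGraph G.edgeSet // T ≤ G.lineGraph ∧ T.IsTree} ≃
      {T' : SimpleGraph G.Dart //
        T' ≤ cliqueInserted G ∧ fromEdgeSet (cliqueMatching G) ≤ T' ∧ T'.IsTree} where
  toFun T := ⟨cliqueLift G T, cliqueLift_le_cliqueInserted,
    fromEdgeSet_cliqueMatching_le_cliqueLift, (cliqueLift_isTree_iff T.2.1).2 T.2.2⟩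
  invFun T' := ⟨lineProj G T', lineProj_le_lineGraph T'.2.1, by
    rw [← cliqueLift_isTree_iff (lineProj_le_lineGraph T'.2.1),
      cliqueLift_lineProj T'.2.1 T'.2.2.1]
    exact T'.2.2.2⟩
  left_inv T := Subtype.ext (lineProj_cliqueLift T.2.1)
  right_inv T' := Subtype.ext (cliqueLift_lineProj T'.2.1 T'.2.2.1)

/-- For a finite simple graph `G`, with `C(G)` the clique-inserted graph (vertices: the
darts of `G`) and `M = {s(d, d.symm) | d a dart}` the set of edges joining the two darts
of each edge: `M` is a matching of `C(G)`, every connected component of `C(G) − M` is a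
complete graph, and `t(L(G))` equals the number of spanning trees of `C(G)` containing
all edges of `M`. -/
theorem stmt18 [Fintype V] (G : SimpleGraph V) :
    ({e : Sym2 G.Dart | ∃ d : G.Dart, e = s(d, d.symm)} ⊆ (cliqueInserted G).edgeSet ∧
      ∀ e ∈ {e : Sym2 G.Dart | ∃ d : G.Dart, e = s(d, d.symm)},
        ∀ f ∈ {e : Sym2 G.Dart | ∃ d : G.Dart, e = s(d, d.symm)},
          e ≠ f → ∀ x : G.Dart, ¬(x ∈ e ∧ x ∈ f)) ∧
    (∀ x y : G.Dart,
      ((cliqueInserted G).deleteEdges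
        {e : Sym2 G.Dart | ∃ d : G.Dart, e = s(d, d.symm)}).Reachable x y → x ≠ y →
      ((cliqueInserted G).deleteEdges
        {e : Sym2 G.Dart | ∃ d : G.Dart, e = s(d, d.symm)}).Adj x y) ∧
    treeCount (SimpleGraph.lineGraph G) =
      treeCountContaining (cliqueInserted G)
        (SimpleGraph.fromEdgeSet {e : Sym2 G.Dart | ∃ d : G.Dart, e = s(d, d.symm)}) :=
  ⟨⟨cliqueMatching_subset_edgeSet, fun _ he _ hf => cliqueMatching_disjoint he hf⟩,
    fun _ _ hxy hne => cliqueInserted_deleteEdges_adj.2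
      ⟨hne, hxy.fst_eq_of_cliqueInserted_deleteEdges⟩,
    Nat.card_congr (spanningTreesEquiv G)⟩
end
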